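/- (Bose's criterion.) Let s, t, α be positive integers and let Γ be a strongly regular graph with parameters n = (s+1)(st+α)/α, k = s(t+1), λ = s−1+t(α−1), μ = α(t+1). Then there exists a partial geometry pg(s,t,α) whose point graph is isomorphic to Γ if and only if Γ possesses a family of (t+1)(st+α)/α cliques of size s+1, every two of which share at most one vertex. -/
import Mathlib


/-- A partial geometry `pg(s,t,α)`: a finite incidence structure of points `P`
and lines `L` (with incidence relation `I`) such that
(1) two distinct points are on at most one common line,
(2) every line has exactly `s+1` points (`s ≥ 1`),
(3) every point is on exactly `t+1` lines (`t ≥ 1`),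
(4) for every non-incident point-line pair `(p, l)` there are exactly `a ≥ 1`
lines through `p` meeting `l`. -/
def IsPartialGeometry {P L : Type*} (I : P → L → Prop) (s t a : ℕ) : Prop :=
  Finite P ∧ Finite L ∧ 1 ≤ s ∧ 1 ≤ t ∧ 1 ≤ a ∧
  (∀ p q : P, p ≠ q → {l : L | I p l ∧ I q l}.ncard ≤ 1) ∧
  (∀ l : L, {p : P | I p l}.ncard = s + 1) ∧
  (∀ p : P, {l : L | I p l}.ncard = t + 1) ∧
  (∀ (p : P) (l : L), ¬ I p l →
    {m : L | I p m ∧ ∃ q : P, I q m ∧ I q l}.ncard = a)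

/-- A strongly regular graph with parameters `(n, k, lam, mu)`, described by its
(symmetric, irreflexive) adjacency relation `Adj` on the finite vertex type `V`:
there are `n` vertices, every vertex has exactly `k` neighbors, any two adjacent
vertices have exactly `lam` common neighbors, and any two distinct nonadjacent
vertices have exactly `mu` common neighbors. -/
def IsStronglyRegular {V : Type*} (Adj : V → V → Prop) (n k lam mu : ℕ) : Prop :=
  Finite V ∧ Nat.card V = n ∧
  (∀ v w, Adj v w → Adj w v) ∧ (∀ v, ¬ Adj v v) ∧
  (∀ v, {w | Adj v w}.ncard = k) ∧
  (∀ v w, Adj v w → {u | Adj v u ∧ Adj w u}.ncard = lam) ∧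
  (∀ v w, v ≠ w → ¬ Adj v w → {u | Adj v u ∧ Adj w u}.ncard = mu)

universe u

open Finset

private lemma swap_count {α β : Type*} (A : Finset α) (B : Finset β)
    (r : α → β → Prop) [∀ x y, Decidable (r x y)] :
    ∑ x ∈ A, (B.filter (fun y => r x y)).card
      = ∑ y ∈ B, (A.filter (fun x => r x y)).card := by
  simp_rw [Finset.card_filter]
  exact Finset.sum_comm

private lemma srg_card {V : Type*} {Adj : V → V → Prop} {s t a : ℕ}
    (hs : 1 ≤ s) (ht : 1 ≤ t) (ha : 1 ≤ a)
    (hΓ : IsStronglyRegular Adj ((s + 1) * (s * t + a) / a) (s * (t + 1))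
      (s - 1 + t * (a - 1)) (a * (t + 1))) :
    a * Nat.card V = (s + 1) * (s * t + a) := by
  obtain ⟨s1, rfl⟩ : ∃ s1, s = s1 + 1 := ⟨s - 1, by omega⟩
  obtain ⟨a1, rfl⟩ : ∃ a1, a = a1 + 1 := ⟨a - 1, by omega⟩
  obtain ⟨hfin, hn, hsymm, hirr, hdeg, hlam, hmu⟩ := hΓ
  have : Fintype V := Fintype.ofFinite V
  classical
  simp only [Nat.add_sub_cancel] at hlam
  -- V is nonempty
  have hV : 0 < Nat.card V := by
    rw [hn]
    refine Nat.div_pos ?_ (by omega)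
    calc a1 + 1 ≤ (s1+1) * t + (a1+1) := by omega
      _ ≤ (s1 + 1 + 1) * ((s1+1) * t + (a1 + 1)) := Nat.le_mul_of_pos_left _ (by omega)
  obtain ⟨v⟩ : Nonempty V := (Nat.card_pos_iff.mp hV).1
  have hdeg' : ∀ v : V, (univ.filter (fun w => Adj v w)).card = (s1+1) * (t + 1) := by
    intro v
    have := hdeg v
    rwa [Set.ncard_eq_toFinset_card', Set.toFinset_setOf] at this
  have hlam' : ∀ v w : V, Adj v w →
      (univ.filter (fun u => Adj v u ∧ Adj w u)).card = s1 + t * a1 := by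
    intro v w h
    have := hlam v w h
    rwa [Set.ncard_eq_toFinset_card', Set.toFinset_setOf] at this
  have hmu' : ∀ v w : V, v ≠ w → ¬ Adj v w →
      (univ.filter (fun u => Adj v u ∧ Adj w u)).card = (a1+1) * (t + 1) := by
    intro v w h h'
    have := hmu v w h h'
    rwa [Set.ncard_eq_toFinset_card', Set.toFinset_setOf] at this
  -- a neighbor of v
  set k := (s1 + 1) * (t + 1) with hk
  set lam := s1 + t * a1 with hlamdef
  set N : V → Finset V := fun v => univ.filter (fun w => Adj v w) with hN
  set M : Finset V := univ.filter (fun u => u ≠ v ∧ ¬ Adj v u) with hM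
  -- cardinality split of univ
  have hsplit : M ∪ N v ∪ {v} = univ := by
    ext u
    simp only [hM, hN, mem_union, mem_filter, mem_univ, true_and, mem_singleton]
    by_cases h1 : u = v <;> by_cases h2 : Adj v u <;> tauto
  have hd1 : Disjoint M (N v) := by
    simp only [Finset.disjoint_left, hM, hN, mem_filter, mem_univ, true_and]
    tauto
  have hd2 : Disjoint (M ∪ N v) ({v} : Finset V) := by
    simp only [Finset.disjoint_left, hM, hN, mem_union, mem_filter, mem_univ, true_and,
      mem_singleton]
    rintro x (⟨hx, _⟩ | hx) rfl
    · exact hx rfl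
    · exact hirr _ hx
  have hMcard : M.card + k + 1 = Fintype.card V := by
    have := congrArg Finset.card hsplit
    rwa [Finset.card_union_of_disjoint hd2, Finset.card_union_of_disjoint hd1,
      hdeg' v, Finset.card_singleton, Finset.card_univ] at this
  -- per-neighbor count
  have hper : ∀ w ∈ N v, (M.filter (fun u => Adj w u)).card + lam + 1 = k := by
    intro w hw
    have hvw : Adj v w := by simpa [hN] using hw
    have hsplit2 : M.filter (fun u => Adj w u) ∪ univ.filter (fun u => Adj v u ∧ Adj w u)
        ∪ {v} = univ.filter (fun u => Adj w u) := by
      ext u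
      have hwv : Adj w v := hsymm v w hvw
      simp only [hM, mem_union, mem_filter, mem_univ, true_and, mem_singleton,
        Finset.filter_filter]
      by_cases h1 : u = v
      · subst h1; simp [hwv]
      · by_cases h2 : Adj v u <;> by_cases h3 : Adj w u <;> tauto
    have hd3 : Disjoint (M.filter (fun u => Adj w u))
        (univ.filter (fun u => Adj v u ∧ Adj w u)) := by
      simp only [Finset.disjoint_left, hM, mem_filter, mem_univ, true_and]
      tauto
    have hd4 : Disjoint (M.filter (fun u => Adj w u) ∪ univ.filter (fun u => Adj v u ∧ Adj w u))
        ({v} : Finset V) := by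
      simp only [Finset.disjoint_left, hM, mem_union, mem_filter, mem_univ, true_and,
        mem_singleton]
      rintro x (⟨⟨hx, _⟩, _⟩ | ⟨hx, _⟩) rfl
      · exact hx rfl
      · exact hirr _ hx
    have := congrArg Finset.card hsplit2
    rwa [Finset.card_union_of_disjoint hd4, Finset.card_union_of_disjoint hd3,
      hlam' v w hvw, Finset.card_singleton, hdeg' w] at this
  -- sum over neighbors
  have hsum1 : ∑ w ∈ N v, ((M.filter (fun u => Adj w u)).card + lam + 1) = k * k := by
    rw [Finset.sum_congr rfl hper, Finset.sum_const, smul_eq_mul]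
    have : (N v).card = k := hdeg' v
    rw [this]
  have hsum2 : ∑ w ∈ N v, (M.filter (fun u => Adj w u)).card = M.card * ((a1+1) * (t+1)) := by
    rw [swap_count (N v) M (fun w u => Adj w u)]
    rw [Finset.sum_congr rfl (fun u hu => ?_), Finset.sum_const, smul_eq_mul]
    have huM : u ≠ v ∧ ¬ Adj v u := by simpa [hM] using hu
    have : (N v).filter (fun w => Adj w u) = univ.filter (fun w => Adj v w ∧ Adj u w) := by
      simp only [hN, Finset.filter_filter]
      exact Finset.filter_congr (fun x _ => by
        constructor
        · exact fun ⟨h1, h2⟩ => ⟨h1, hsymm x u h2⟩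
        · exact fun ⟨h1, h2⟩ => ⟨h1, hsymm u x h2⟩)
    rw [this, hmu' v u (Ne.symm huM.1) huM.2]
  -- assemble
  have hS : M.card * ((a1+1) * (t+1)) + k * (lam + 1) = k * k := by
    rw [← hsum2]
    rw [Finset.sum_add_distrib, Finset.sum_add_distrib, Finset.sum_const, Finset.sum_const,
      smul_eq_mul, smul_eq_mul, hdeg' v] at hsum1
    · linarith [hsum1]
  have key : ((a1+1) * Nat.card V) * (t+1) = ((s1+1+1) * ((s1+1) * t + (a1+1))) * (t+1) := by
    have hn2 : (M.card : ℤ) + k + 1 = Fintype.card V := by exact_mod_cast hMcard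
    have hS2 : (M.card : ℤ) * ((a1+1) * (t+1)) + k * (lam + 1) = k * k := by exact_mod_cast hS
    have hcard : (Nat.card V : ℤ) = Fintype.card V := by exact_mod_cast Nat.card_eq_fintype_card
    zify
    rw [hcard]
    simp only [hk, hlamdef] at hn2 hS2 ⊢
    push_cast at hn2 hS2 ⊢
    linear_combination (-((a1:ℤ)+1)) * ((t:ℤ)+1) * hn2 + hS2
  have := Nat.eq_of_mul_eq_mul_right (show 0 < t + 1 by omega) key
  simpa using this

private lemma clique_reg {V : Type*} {Adj : V → V → Prop} {s t a : ℕ}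
    (hs : 1 ≤ s) (ht : 1 ≤ t) (ha : 1 ≤ a)
    (hΓ : IsStronglyRegular Adj ((s + 1) * (s * t + a) / a) (s * (t + 1))
      (s - 1 + t * (a - 1)) (a * (t + 1)))
    (hcard : a * Nat.card V = (s + 1) * (s * t + a))
    (c : Set V) (hc1 : c.ncard = s + 1)
    (hc2 : ∀ x ∈ c, ∀ y ∈ c, x ≠ y → Adj x y)
    {p : V} (hp : p ∉ c) : {q | q ∈ c ∧ Adj p q}.ncard = a := by
  obtain ⟨s1, rfl⟩ : ∃ s1, s = s1 + 1 := ⟨s - 1, by omega⟩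
  obtain ⟨a1, rfl⟩ : ∃ a1, a = a1 + 1 := ⟨a - 1, by omega⟩
  obtain ⟨hfin, hn, hsymm, hirr, hdeg, hlam, hmu⟩ := hΓ
  have : Fintype V := Fintype.ofFinite V
  classical
  simp only [Nat.add_sub_cancel] at hlam
  set k := (s1 + 1) * (t + 1) with hk
  set lam := s1 + t * a1 with hlamdef
  have hdeg' : ∀ v : V, (univ.filter (fun w => Adj v w)).card = k := by
    intro v
    have := hdeg v
    rwa [Set.ncard_eq_toFinset_card', Set.toFinset_setOf] at this
  have hlam' : ∀ v w : V, Adj v w →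
      (univ.filter (fun u => Adj v u ∧ Adj w u)).card = lam := by
    intro v w h
    have := hlam v w h
    rwa [Set.ncard_eq_toFinset_card', Set.toFinset_setOf] at this
  set C : Finset V := c.toFinset with hC
  have hCc : C.card = s1 + 1 + 1 := by
    rw [← hc1, Set.ncard_eq_toFinset_card']
  set Pb : Finset V := univ \ C with hPb
  set x : V → ℕ := fun p => (C.filter (fun q => Adj p q)).card with hx
  have hF1 : ∀ q ∈ C, C.filter (fun u => Adj q u) = C.erase q := by
    intro q hq
    ext u
    simp only [mem_filter, mem_erase]
    constructor
    · rintro ⟨hu, hadj⟩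
      exact ⟨fun h => hirr q (h ▸ hadj), hu⟩
    · rintro ⟨hne, hu⟩
      exact ⟨hu, hc2 q (by simpa [hC] using hq) u (by simpa [hC] using hu) (Ne.symm hne)⟩
  have hsplitP : ∀ (P : V → Prop) (_ : DecidablePred P),
      (C.filter P).card + (Pb.filter P).card = (univ.filter P).card := by
    intro P hdec
    rw [← Finset.card_union_of_disjoint
      (Finset.disjoint_filter_filter Finset.disjoint_sdiff)]
    congr 1
    rw [← Finset.filter_union]
    congr 1
    simp [hPb]
  have hF2 : ∀ q ∈ C, (Pb.filter (fun u => Adj q u)).card = (s1 + 1) * t := by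
    intro q hq
    have h1 := hsplitP (fun u => Adj q u) inferInstance
    rw [hF1 q hq, hdeg' q, Finset.card_erase_of_mem hq, hCc] at h1
    have hkk : k = (s1 + 1) * t + (s1 + 1) := by rw [hk]; ring
    omega
  have hF3 : ∀ q ∈ C, ∀ q' ∈ C, q ≠ q' →
      (Pb.filter (fun u => Adj q u ∧ Adj q' u)).card = t * a1 := by
    intro q hq q' hq' hne
    have h1 := hsplitP (fun u => Adj q u ∧ Adj q' u) inferInstance
    have hqq' : Adj q q' := hc2 q (by simpa [hC] using hq) q' (by simpa [hC] using hq') hne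
    have hCpart : C.filter (fun u => Adj q u ∧ Adj q' u) = (C.erase q).erase q' := by
      ext u
      simp only [mem_filter, mem_erase]
      constructor
      · rintro ⟨hu, h1, h2⟩
        exact ⟨fun h => hirr q' (h ▸ h2), fun h => hirr q (h ▸ h1), hu⟩
      · rintro ⟨hne1, hne2, hu⟩
        have huc : u ∈ c := by simpa [hC] using hu
        exact ⟨hu, hc2 q (by simpa [hC] using hq) u huc (Ne.symm hne2),
          hc2 q' (by simpa [hC] using hq') u huc (Ne.symm hne1)⟩
    rw [hCpart, hlam' q q' hqq'] at h1
    rw [Finset.card_erase_of_mem (Finset.mem_erase.mpr ⟨Ne.symm hne, hq'⟩),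
      Finset.card_erase_of_mem hq, hCc] at h1
    omega
  -- first moment
  have hS1 : ∑ p ∈ Pb, x p = (s1 + 1 + 1) * ((s1 + 1) * t) := by
    simp only [hx]
    rw [swap_count Pb C (fun p q => Adj p q)]
    rw [Finset.sum_congr rfl (fun q hq => ?_), Finset.sum_const, smul_eq_mul, hCc]
    have h2 : Pb.filter (fun p => Adj p q) = Pb.filter (fun p => Adj q p) :=
      Finset.filter_congr (fun u _ => ⟨fun h => hsymm u q h, fun h => hsymm q u h⟩)
    rw [h2, hF2 q hq]
  -- second moment
  have hS2 : ∑ p ∈ Pb, (x p) * (x p) =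
      (s1 + 1 + 1) * ((s1 + 1) * t + (s1 + 1) * (t * a1)) := by
    have hexp : ∀ p, (x p) * (x p)
        = ∑ q ∈ C, ∑ q' ∈ C, (if Adj p q ∧ Adj p q' then 1 else 0) := by
      intro p
      simp only [hx, Finset.card_filter]
      rw [Finset.sum_mul_sum]
      refine Finset.sum_congr rfl (fun q _ => Finset.sum_congr rfl (fun q' _ => ?_))
      by_cases h1 : Adj p q <;> by_cases h2 : Adj p q' <;> simp [h1, h2]
    rw [Finset.sum_congr rfl (fun p _ => hexp p), Finset.sum_comm]
    rw [Finset.sum_congr rfl (fun q (hq : q ∈ C) => Finset.sum_comm)]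
    have hinner : ∀ q ∈ C, ∀ q' ∈ C,
        (∑ p ∈ Pb, (if Adj p q ∧ Adj p q' then 1 else 0))
          = (Pb.filter (fun u => Adj q u ∧ Adj q' u)).card := by
      intro q hq q' hq'
      rw [Finset.card_filter]
      refine Finset.sum_congr rfl (fun u _ => ?_)
      congr 1
      simp only [eq_iff_iff]
      constructor
      · rintro ⟨h1, h2⟩; exact ⟨hsymm u q h1, hsymm u q' h2⟩
      · rintro ⟨h1, h2⟩; exact ⟨hsymm q u h1, hsymm q' u h2⟩
    calc ∑ q ∈ C, ∑ q' ∈ C, ∑ p ∈ Pb, (if Adj p q ∧ Adj p q' then 1 else 0)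
        = ∑ q ∈ C, ((s1 + 1) * t + (s1 + 1) * (t * a1)) := by
          refine Finset.sum_congr rfl (fun q hq => ?_)
          rw [Finset.sum_congr rfl (fun q' hq' => hinner q hq q' hq')]
          rw [← Finset.add_sum_erase _ _ hq]
          congr 1
          · have h3 : Pb.filter (fun u => Adj q u ∧ Adj q u)
                = Pb.filter (fun u => Adj q u) := by simp
            rw [h3, hF2 q hq]
          · rw [Finset.sum_congr rfl (fun q' hq' =>
              hF3 q hq q' (Finset.mem_of_mem_erase hq')
                (Ne.symm (Finset.ne_of_mem_erase hq')))]
            rw [Finset.sum_const, smul_eq_mul, Finset.card_erase_of_mem hq, hCc]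
            norm_num
      _ = (s1 + 1 + 1) * ((s1 + 1) * t + (s1 + 1) * (t * a1)) := by
          rw [Finset.sum_const, smul_eq_mul, hCc]
  -- |Pb|
  have hnV : s1 + 1 + 1 ≤ Nat.card V := by
    by_contra h
    push_neg at h
    have h1 : (a1 + 1) * Nat.card V ≤ (a1 + 1) * (s1 + 1) := Nat.mul_le_mul_left _ (by omega)
    rw [hcard] at h1
    have h2 : (s1 + 1 + 1) * (a1 + 1) ≤ (s1 + 1 + 1) * ((s1 + 1) * t + (a1 + 1)) :=
      Nat.mul_le_mul_left _ (by omega)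
    nlinarith [h1, h2]
  have hPbcard : (a1 + 1) * Pb.card = (s1 + 1 + 1) * ((s1 + 1) * t) := by
    have h1 : Pb.card = Fintype.card V - C.card := Finset.card_sdiff_of_subset (Finset.subset_univ C)
    have h2 : (Fintype.card V : ℕ) = Nat.card V := Nat.card_eq_fintype_card.symm
    rw [h1, h2, hCc]
    zify [hnV]
    have hcardZ : ((a1:ℤ) + 1) * (Nat.card V)
        = (s1 + 1 + 1) * ((s1 + 1) * t + (a1 + 1)) := by exact_mod_cast hcard
    linear_combination hcardZ
  -- variance
  have hvar : ∑ p ∈ Pb, ((x p : ℤ) - (a1 + 1)) ^ 2 = 0 := by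
    have h1 : ∑ p ∈ Pb, ((x p : ℤ) - (a1 + 1)) ^ 2
        = (∑ p ∈ Pb, ((x p : ℤ) * (x p : ℤ)))
          - (2 * ((a1:ℤ) + 1)) * (∑ p ∈ Pb, (x p : ℤ)) + (Pb.card : ℤ) * ((a1:ℤ) + 1) ^ 2 := by
      have e1 : ∀ p ∈ Pb, ((x p : ℤ) - (a1 + 1)) ^ 2
          = (x p : ℤ) * (x p : ℤ) - (2 * ((a1:ℤ) + 1)) * (x p : ℤ) + ((a1:ℤ) + 1) ^ 2 :=
        fun p _ => by ring
      rw [Finset.sum_congr rfl e1, Finset.sum_add_distrib, Finset.sum_sub_distrib,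
        ← Finset.mul_sum, Finset.sum_const, nsmul_eq_mul]
    rw [h1]
    have c2 : (∑ p ∈ Pb, ((x p : ℤ) * (x p : ℤ)))
        = ((s1:ℤ) + 1 + 1) * (((s1:ℤ) + 1) * t + ((s1:ℤ) + 1) * (t * a1)) := by
      exact_mod_cast hS2
    have c1 : (∑ p ∈ Pb, ((x p : ℤ))) = ((s1:ℤ) + 1 + 1) * (((s1:ℤ) + 1) * t) := by
      exact_mod_cast hS1
    have c0 : ((a1:ℤ) + 1) * (Pb.card : ℤ) = ((s1:ℤ) + 1 + 1) * (((s1:ℤ) + 1) * t) := by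
      exact_mod_cast hPbcard
    linear_combination c2 - 2 * ((a1:ℤ) + 1) * c1 + ((a1:ℤ) + 1) * c0
  have hmem : p ∈ Pb := by
    simp only [hPb, mem_sdiff, mem_univ, true_and, hC, Set.mem_toFinset]
    exact hp
  have hzero := (Finset.sum_eq_zero_iff_of_nonneg (fun i _ => sq_nonneg _)).mp hvar p hmem
  have hxp : (x p : ℤ) = (a1 : ℤ) + 1 := by
    have := pow_eq_zero_iff (n := 2) (by omega) |>.mp hzero
    linarith [this]
  have hxp' : x p = a1 + 1 := by exact_mod_cast hxp
  rw [Set.ncard_eq_toFinset_card', Set.toFinset_setOf]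
  rw [← hxp']
  simp only [hx]
  congr 1
  ext u
  simp [hC, Set.mem_toFinset, and_comm]

/-- Bose's criterion: a strongly regular graph `Γ` with parameters
`n = (s+1)(st+α)/α`, `k = s(t+1)`, `λ = s-1+t(α-1)`, `μ = α(t+1)` (`s, t, α`
positive) is the point graph of some partial geometry `pg(s,t,α)` if and only
if `Γ` possesses a family of `(t+1)(st+α)/α` cliques of size `s + 1`, every
two of which share at most one vertex. -/
theorem stmt19 {V : Type u} {Adj : V → V → Prop} {s t a : ℕ}
    (hs : 1 ≤ s) (ht : 1 ≤ t) (ha : 1 ≤ a)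
    (hΓ : IsStronglyRegular Adj ((s + 1) * (s * t + a) / a) (s * (t + 1))
      (s - 1 + t * (a - 1)) (a * (t + 1))) :
    (∃ (P : Type u) (L : Type u) (I : P → L → Prop),
        IsPartialGeometry I s t a ∧
        ∃ e : P ≃ V, ∀ p q : P,
          ((p ≠ q ∧ ∃ l : L, I p l ∧ I q l) ↔ Adj (e p) (e q)))
    ↔
    (∃ F : Set (Set V), F.ncard = (t + 1) * (s * t + a) / a ∧
       (∀ c ∈ F, c.ncard = s + 1 ∧ ∀ x ∈ c, ∀ y ∈ c, x ≠ y → Adj x y) ∧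
       (∀ c ∈ F, ∀ c' ∈ F, c ≠ c' → (c ∩ c').ncard ≤ 1)) := by
  have hcard : a * Nat.card V = (s + 1) * (s * t + a) := srg_card hs ht ha hΓ
  obtain ⟨hfin, hn, hsymm, hirr, hdeg, hlam, hmu⟩ := id hΓ
  have : Fintype V := Fintype.ofFinite V
  classical
  have hdeg' : ∀ v : V, (univ.filter (fun w => Adj v w)).card = s * (t + 1) := by
    intro v
    have := hdeg v
    rwa [Set.ncard_eq_toFinset_card', Set.toFinset_setOf] at this
  constructor
  · -- forward: geometry gives family of cliques
    rintro ⟨P, L, I, hPG, e, he⟩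
    obtain ⟨hPfin, hLfin, -, -, -, hax1, hax2, hax3, -⟩ := hPG
    have : Fintype P := Fintype.ofFinite P
    have : Fintype L := Fintype.ofFinite L
    set f : L → Set V := fun l => e '' {p | I p l} with hf
    have hmem : ∀ (u : V) (l : L), u ∈ f l ↔ I (e.symm u) l := by
      intro u l
      constructor
      · rintro ⟨p, hp, rfl⟩; simpa using hp
      · intro h; exact ⟨e.symm u, h, by simp⟩
    have hint : ∀ l l' : L, l ≠ l' → (f l ∩ f l').ncard ≤ 1 := by
      intro l l' hne
      by_contra hgt
      push_neg at hgt
      obtain ⟨u, hu, w, hw, huw⟩ := (Set.one_lt_ncard (Set.toFinite _)).mp hgt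
      have hpu := (hmem u l).mp hu.1
      have hpu' := (hmem u l').mp hu.2
      have hpw := (hmem w l).mp hw.1
      have hpw' := (hmem w l').mp hw.2
      have hne2 : e.symm u ≠ e.symm w := fun h => huw (by
        have := congrArg e h; simpa using this)
      have h2 := hax1 (e.symm u) (e.symm w) hne2
      have h3 : ({l, l'} : Set L) ⊆ {m | I (e.symm u) m ∧ I (e.symm w) m} := by
        rintro m (rfl | rfl)
        · exact ⟨hpu, hpw⟩
        · exact ⟨hpu', hpw'⟩
      have h4 := Set.ncard_le_ncard h3 (Set.toFinite _)
      rw [Set.ncard_pair hne] at h4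
      omega
    have hsize : ∀ l : L, (f l).ncard = s + 1 := by
      intro l
      rw [hf]
      simp only
      rw [Set.ncard_image_of_injective _ e.injective]
      exact hax2 l
    have hfinj : Function.Injective f := by
      intro l l' h
      by_contra hne
      have h1 := hint l l' hne
      rw [h, Set.inter_self] at h1
      have h2 := hsize l'
      omega
    refine ⟨Set.range f, ?_, ?_, ?_⟩
    · have h1 : (Set.range f).ncard = Nat.card L := by
        rw [← Set.image_univ, Set.ncard_image_of_injective _ hfinj, Set.ncard_univ]
      have h4 : ∀ p : P, ((univ : Finset L).filter (fun l => I p l)).card = t + 1 := by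
        intro p
        have := hax3 p
        rwa [Set.ncard_eq_toFinset_card', Set.toFinset_setOf] at this
      have h5 : ∀ l : L, ((univ : Finset P).filter (fun p => I p l)).card = s + 1 := by
        intro l
        have := hax2 l
        rwa [Set.ncard_eq_toFinset_card', Set.toFinset_setOf] at this
      have h2 : (Fintype.card P) * (t + 1) = (Fintype.card L) * (s + 1) := by
        have h3 := swap_count (univ : Finset P) (univ : Finset L) (fun p l => I p l)
        rw [Finset.sum_congr rfl (fun p _ => h4 p), Finset.sum_congr rfl (fun l _ => h5 l),
          Finset.sum_const, Finset.sum_const, smul_eq_mul, smul_eq_mul,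
          Finset.card_univ, Finset.card_univ] at h3
        exact h3
      have hPV : a * Nat.card P = (s + 1) * (s * t + a) := by
        rw [Nat.card_congr e]; exact hcard
      have h6 : (Nat.card L * a) * (s + 1) = ((t + 1) * (s * t + a)) * (s + 1) := by
        have e2 : (Nat.card P) * (t + 1) = (Nat.card L) * (s + 1) := by
          rw [Nat.card_eq_fintype_card, Nat.card_eq_fintype_card]; exact h2
        calc (Nat.card L * a) * (s + 1) = a * (Nat.card L * (s + 1)) := by ring
          _ = a * ((Nat.card P) * (t + 1)) := by rw [e2]
          _ = (a * Nat.card P) * (t + 1) := by ring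
          _ = ((s + 1) * (s * t + a)) * (t + 1) := by rw [hPV]
          _ = ((t + 1) * (s * t + a)) * (s + 1) := by ring
      have h7 : Nat.card L * a = (t + 1) * (s * t + a) :=
        Nat.eq_of_mul_eq_mul_right (by omega) h6
      rw [h1]
      exact (Nat.div_eq_of_eq_mul_left (by omega) h7.symm).symm
    · rintro c ⟨l, rfl⟩
      refine ⟨hsize l, ?_⟩
      intro xx hx yy hy hxy
      have hxl := (hmem xx l).mp hx
      have hyl := (hmem yy l).mp hy
      have hne2 : e.symm xx ≠ e.symm yy := fun h => hxy (by
        have := congrArg e h; simpa using this)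
      have := (he (e.symm xx) (e.symm yy)).mp ⟨hne2, l, hxl, hyl⟩
      simpa using this
    · rintro c ⟨l, rfl⟩ c' ⟨l', rfl⟩ hne
      exact hint l l' (fun h => hne (by rw [h]))
  · -- backward: family of cliques gives geometry
    rintro ⟨F, hFcard, hFcliq, hFint⟩
    have : Fintype (Set V) := Fintype.ofFinite _
    set FF : Finset (Set V) := F.toFinset with hFFdef
    have hFF : FF.card = (t + 1) * (s * t + a) / a := by
      rw [← hFcard, Set.ncard_eq_toFinset_card']
    set d : V → ℕ := fun v => (FF.filter (fun c => v ∈ c)).card with hd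
    have huniq : ∀ c ∈ F, ∀ c' ∈ F, ∀ x y : V, x ≠ y →
        x ∈ c → y ∈ c → x ∈ c' → y ∈ c' → c = c' := by
      intro c hc c' hc' x y hxy hxc hyc hxc' hyc'
      by_contra hne
      have h1 := hFint c hc c' hc' hne
      have h2 : ({x, y} : Set V) ⊆ c ∩ c' := by
        rintro z (rfl | rfl)
        · exact ⟨hxc, hxc'⟩
        · exact ⟨hyc, hyc'⟩
      have h3 := Set.ncard_le_ncard h2 (Set.toFinite _)
      rw [Set.ncard_pair hxy] at h3
      omega
    have hCovsub : ∀ v : V, (FF.filter (fun c => v ∈ c)).biUnion (fun c => c.toFinset.erase v)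
        ⊆ univ.filter (fun w => Adj v w) := by
      intro v w hw
      rw [Finset.mem_biUnion] at hw
      obtain ⟨c, hc, hwc⟩ := hw
      rw [Finset.mem_filter] at hc
      rw [Finset.mem_erase, Set.mem_toFinset] at hwc
      rw [Finset.mem_filter]
      exact ⟨Finset.mem_univ _,
        (hFcliq c (Set.mem_toFinset.mp hc.1)).2 v hc.2 w hwc.2 (Ne.symm hwc.1)⟩
    have hCovcard : ∀ v : V,
        ((FF.filter (fun c => v ∈ c)).biUnion (fun c => c.toFinset.erase v)).card = s * d v := by
      intro v
      have hdisj2 : ∀ c1 ∈ FF.filter (fun c => v ∈ c), ∀ c2 ∈ FF.filter (fun c => v ∈ c),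
          c1 ≠ c2 → Disjoint (c1.toFinset.erase v) (c2.toFinset.erase v) := by
        intro c1 h1 c2 h2 hne
        rw [Finset.mem_filter] at h1 h2
        rw [Finset.disjoint_left]
        intro w hw1 hw2
        rw [Finset.mem_erase, Set.mem_toFinset] at hw1 hw2
        exact hne (huniq c1 (Set.mem_toFinset.mp h1.1) c2 (Set.mem_toFinset.mp h2.1) v w
          (fun h => hw1.1 h.symm) h1.2 hw1.2 h2.2 hw2.2)
      have hcc : ∀ c ∈ FF.filter (fun c => v ∈ c), (c.toFinset.erase v).card = s := by
        intro c hc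
        rw [Finset.mem_filter] at hc
        have hcF := Set.mem_toFinset.mp hc.1
        rw [Finset.card_erase_of_mem (Set.mem_toFinset.mpr hc.2), ← Set.ncard_eq_toFinset_card',
          (hFcliq c hcF).1]
        omega
      rw [Finset.card_biUnion hdisj2, Finset.sum_congr rfl hcc, Finset.sum_const, smul_eq_mul]
      simp only [hd]
      exact mul_comm _ _
    have hdle : ∀ v : V, d v ≤ t + 1 := by
      intro v
      have h1 := Finset.card_le_card (hCovsub v)
      rw [hCovcard v, hdeg' v] at h1
      exact Nat.le_of_mul_le_mul_left h1 (by omega)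
    have hT : ∑ v : V, d v = FF.card * (s + 1) := by
      simp only [hd]
      rw [swap_count univ FF (fun v c => v ∈ c)]
      rw [Finset.sum_congr rfl (fun c hc => ?_), Finset.sum_const, smul_eq_mul]
      have h1 : (univ.filter (fun v : V => v ∈ c)) = c.toFinset := by
        ext u; simp [Set.mem_toFinset]
      rw [h1, ← Set.ncard_eq_toFinset_card', (hFcliq c (Set.mem_toFinset.mp hc)).1]
    set r0 := ((t + 1) * (s * t + a)) % a with hr0
    have hNr : a * FF.card + r0 = (t + 1) * (s * t + a) := by
      rw [hFF, hr0]
      exact Nat.div_add_mod _ a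
    have hr0a : r0 < a := Nat.mod_lt _ (by omega)
    set D := ∑ v : V, (t + 1 - d v) with hD
    have hTD : (∑ v : V, d v) + D = (Fintype.card V) * (t + 1) := by
      rw [hD, ← Finset.sum_add_distrib]
      rw [Finset.sum_congr rfl (fun v _ => by have := hdle v; omega :
        ∀ v ∈ univ, d v + (t + 1 - d v) = t + 1)]
      rw [Finset.sum_const, smul_eq_mul, Finset.card_univ]
    have haD : a * D = r0 * (s + 1) := by
      have e1 : (a : ℤ) * FF.card + r0 = (t + 1) * (s * t + a) := by exact_mod_cast hNr
      have e2 : ((∑ v : V, d v : ℕ) : ℤ) + D = (Fintype.card V) * (t + 1) := by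
        exact_mod_cast hTD
      have e3 : ((∑ v : V, d v : ℕ) : ℤ) = FF.card * (s + 1) := by exact_mod_cast hT
      have e4 : (a : ℤ) * Fintype.card V = (s + 1) * (s * t + a) := by
        rw [← Nat.card_eq_fintype_card]; exact_mod_cast hcard
      have goal : (a : ℤ) * D = r0 * (s + 1) := by
        linear_combination (a : ℤ) * e2 - (a : ℤ) * e3 + ((t : ℤ) + 1) * e4 - ((s : ℤ) + 1) * e1
      exact_mod_cast goal
    have hDs : D ≤ s := by
      by_contra h
      push_neg at h
      have h1 : a * (s + 1) ≤ a * D := Nat.mul_le_mul_left _ h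
      rw [haD] at h1
      have h2 : r0 * (s + 1) < a * (s + 1) := mul_lt_mul_of_pos_right hr0a (by omega)
      exact absurd h1 (not_le.mpr h2)
    have hfull : ∀ v, d v = t + 1 → ∀ w, Adj v w → ∃ c ∈ F, v ∈ c ∧ w ∈ c := by
      intro v hdv w hw
      have hcov : (FF.filter (fun c => v ∈ c)).biUnion (fun c => c.toFinset.erase v)
          = univ.filter (fun w => Adj v w) := by
        refine Finset.eq_of_subset_of_card_le (hCovsub v) ?_
        rw [hCovcard v, hdeg' v, hdv]
      have hwmem : w ∈ univ.filter (fun w => Adj v w) := by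
        rw [Finset.mem_filter]; exact ⟨Finset.mem_univ _, hw⟩
      rw [← hcov, Finset.mem_biUnion] at hwmem
      obtain ⟨c, hc, hwc⟩ := hwmem
      rw [Finset.mem_filter] at hc
      rw [Finset.mem_erase, Set.mem_toFinset] at hwc
      exact ⟨c, Set.mem_toFinset.mp hc.1, hc.2, hwc.2⟩
    have hD0 : D = 0 := by
      by_contra hD0
      have hex : ∃ v, d v ≤ t := by
        by_contra hall
        push_neg at hall
        apply hD0
        rw [hD]
        exact Finset.sum_eq_zero (fun v _ => by have := hall v; omega)
      obtain ⟨v, hv⟩ := hex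
      set S := univ.filter (fun x : V => d x ≤ t) with hS
      have hScard : S.card ≤ D := by
        rw [hD]
        calc S.card = ∑ _x ∈ S, 1 := by simp
          _ ≤ ∑ x ∈ S, (t + 1 - d x) := Finset.sum_le_sum (fun x hx => by
              rw [hS, Finset.mem_filter] at hx; omega)
          _ ≤ ∑ x : V, (t + 1 - d x) := Finset.sum_le_sum_of_subset (Finset.filter_subset _ _)
      set Cov := (FF.filter (fun c => v ∈ c)).biUnion (fun c => c.toFinset.erase v) with hCov
      set Unc := (univ.filter (fun w => Adj v w)) \ Cov with hUnc
      have hUnccard : Unc.card + s * d v = s * (t + 1) := by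
        rw [hUnc, hCov, Finset.card_sdiff_of_subset (hCovsub v), hCovcard v, hdeg' v]
        have h1 : s * d v ≤ s * (t + 1) := by
          have := Finset.card_le_card (hCovsub v)
          rwa [hCovcard v, hdeg' v] at this
        omega
      have hUncs : s ≤ Unc.card := by
        have h1 : s * d v ≤ s * t := Nat.mul_le_mul_left _ hv
        have h2 : s * (t + 1) = s * t + s := by ring
        linarith
      have hUncS : Unc ⊆ S.erase v := by
        intro w hw
        rw [hUnc, Finset.mem_sdiff, Finset.mem_filter] at hw
        obtain ⟨⟨-, hadj⟩, hnc⟩ := hw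
        have hwv : w ≠ v := fun h => hirr v (h ▸ hadj)
        refine Finset.mem_erase.mpr ⟨hwv, ?_⟩
        rw [hS, Finset.mem_filter]
        refine ⟨Finset.mem_univ _, ?_⟩
        by_contra hdt
        push_neg at hdt
        have hdw : d w = t + 1 := le_antisymm (hdle w) hdt
        obtain ⟨c, hcF, hwc, hvc⟩ := hfull w hdw v (hsymm v w hadj)
        apply hnc
        rw [hCov, Finset.mem_biUnion]
        exact ⟨c, Finset.mem_filter.mpr ⟨Set.mem_toFinset.mpr hcF, hvc⟩,
          Finset.mem_erase.mpr ⟨hwv, Set.mem_toFinset.mpr hwc⟩⟩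
      have hvS : v ∈ S := by rw [hS, Finset.mem_filter]; exact ⟨Finset.mem_univ _, hv⟩
      have h9 := Finset.card_le_card hUncS
      rw [Finset.card_erase_of_mem hvS] at h9
      omega
    have hdall : ∀ v, d v = t + 1 := by
      intro v
      have h1 : ∑ v : V, (t + 1 - d v) = 0 := by rw [← hD]; exact hD0
      have h2 := Finset.sum_eq_zero_iff.mp h1 v (Finset.mem_univ v)
      have := hdle v
      omega
    have hedge : ∀ v w, Adj v w → ∃ c ∈ F, v ∈ c ∧ w ∈ c :=
      fun v w hw => hfull v (hdall v) w hw
    -- construct the partial geometry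
    refine ⟨V, {c : Set V // c ∈ F}, fun p l => p ∈ l.1,
      ⟨inferInstance, inferInstance, hs, ht, ha, ?_, ?_, ?_, ?_⟩, Equiv.refl V, ?_⟩
    · -- axiom 1
      intro p q hpq
      by_contra hgt
      push_neg at hgt
      obtain ⟨l1, hl1, l2, hl2, hne⟩ := (Set.one_lt_ncard (Set.toFinite _)).mp hgt
      exact hne (Subtype.ext
        (huniq l1.1 l1.2 l2.1 l2.2 p q hpq hl1.1 hl1.2 hl2.1 hl2.2))
    · -- axiom 2
      intro l
      have := (hFcliq l.1 l.2).1
      simpa [Set.setOf_mem_eq] using this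
    · -- axiom 3
      intro p
      have himg : Subtype.val '' {l : {c : Set V // c ∈ F} | p ∈ l.1}
          = {c : Set V | c ∈ F ∧ p ∈ c} := by
        ext cc
        constructor
        · rintro ⟨⟨c, hc⟩, hp, rfl⟩; exact ⟨hc, hp⟩
        · rintro ⟨h1, h2⟩; exact ⟨⟨cc, h1⟩, h2, rfl⟩
      have h1 : {l : {c : Set V // c ∈ F} | p ∈ l.1}.ncard
          = {c : Set V | c ∈ F ∧ p ∈ c}.ncard := by
        rw [← himg, Set.ncard_image_of_injective _ Subtype.val_injective]
      rw [h1]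
      have h2 : {c : Set V | c ∈ F ∧ p ∈ c}.toFinset = FF.filter (fun c => p ∈ c) := by
        ext cc; simp [Set.mem_toFinset, hFFdef]
      rw [Set.ncard_eq_toFinset_card', h2]
      exact hdall p
    · -- axiom 4
      intro p l hpl
      have hc0 := hFcliq l.1 l.2
      have hA : {q | q ∈ l.1 ∧ Adj p q}.ncard = a :=
        clique_reg hs ht ha hΓ hcard l.1 hc0.1 hc0.2 hpl
      set g : V → {c : Set V // c ∈ F} := fun q =>
        if h : ∃ c, c ∈ F ∧ p ∈ c ∧ q ∈ c then ⟨h.choose, h.choose_spec.1⟩ else l with hg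
      have hspec : ∀ q : V, ∀ h : ∃ c, c ∈ F ∧ p ∈ c ∧ q ∈ c,
          p ∈ (g q).1 ∧ q ∈ (g q).1 := by
        intro q h
        rw [hg]
        simp only [dif_pos h]
        exact ⟨h.choose_spec.2.1, h.choose_spec.2.2⟩
      have hginj : Set.InjOn g {q | q ∈ l.1 ∧ Adj p q} := by
        intro q1 h1 q2 h2 heq
        have e1 : ∃ c, c ∈ F ∧ p ∈ c ∧ q1 ∈ c := by
          obtain ⟨c, hc, hx⟩ := hedge p q1 h1.2; exact ⟨c, hc, hx⟩
        have e2 : ∃ c, c ∈ F ∧ p ∈ c ∧ q2 ∈ c := by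
          obtain ⟨c, hc, hx⟩ := hedge p q2 h2.2; exact ⟨c, hc, hx⟩
        obtain ⟨hp1, hq1⟩ := hspec q1 e1
        obtain ⟨hp2, hq2⟩ := hspec q2 e2
        rw [heq] at hq1
        by_contra hne
        have : (g q2).1 = l.1 :=
          huniq (g q2).1 (g q2).2 l.1 l.2 q1 q2 hne hq1 hq2 h1.1 h2.1
        exact hpl (show p ∈ (l : Set V) by rw [← this]; exact hp2)
      have himg2 : g '' {q | q ∈ l.1 ∧ Adj p q}
          = {m : {c : Set V // c ∈ F} | p ∈ m.1 ∧ ∃ q, q ∈ m.1 ∧ q ∈ l.1} := by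
        ext m
        constructor
        · rintro ⟨q, ⟨hql, hadj⟩, rfl⟩
          have e1 : ∃ c, c ∈ F ∧ p ∈ c ∧ q ∈ c := by
            obtain ⟨c, hc, hx⟩ := hedge p q hadj; exact ⟨c, hc, hx⟩
          obtain ⟨hp1, hq1⟩ := hspec q e1
          exact ⟨hp1, q, hq1, hql⟩
        · rintro ⟨hpm, q, hqm, hql⟩
          have hqp : q ≠ p := fun h => hpl (h ▸ hql)
          have hadj : Adj p q := (hFcliq m.1 m.2).2 p hpm q hqm (Ne.symm hqp)
          refine ⟨q, ⟨hql, hadj⟩, ?_⟩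
          have e1 : ∃ c, c ∈ F ∧ p ∈ c ∧ q ∈ c := ⟨m.1, m.2, hpm, hqm⟩
          obtain ⟨hp1, hq1⟩ := hspec q e1
          exact Subtype.ext (huniq (g q).1 (g q).2 m.1 m.2 p q (Ne.symm hqp) hp1 hq1 hpm hqm)
      calc {m : {c : Set V // c ∈ F} | p ∈ m.1 ∧ ∃ q, q ∈ m.1 ∧ q ∈ l.1}.ncard
          = (g '' {q | q ∈ l.1 ∧ Adj p q}).ncard := by rw [himg2]
        _ = {q | q ∈ l.1 ∧ Adj p q}.ncard := Set.ncard_image_of_injOn hginj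
        _ = a := hA
    · -- point graph isomorphism
      intro p q
      simp only [Equiv.refl_apply]
      constructor
      · rintro ⟨hne, l, h1, h2⟩
        exact (hFcliq l.1 l.2).2 p h1 q h2 hne
      · intro hadj
        have hne : p ≠ q := fun h => hirr p (h ▸ hadj)
        obtain ⟨c, hc, h1, h2⟩ := hedge p q hadj
        exact ⟨hne, ⟨c, hc⟩, h1, h2⟩
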